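/- Let a₁ = (1/(2√3))·(1, 1, 1), a₂ = (1/(2√3))·(−1, −1, 1), a₃ = (1/(2√3))·(−1, 1, −1), a₄ = (1/(2√3))·(1, −1, −1) in ℝ³. Then ∑_{i=1}^4 a_i = 0, ∑_{i=1}^4 ‖a_i‖ = 2, and for every pair of distinct indices i ≠ j, ‖a_i‖ + ‖a_j‖ − ‖a_i + a_j‖ = 1 − 1/√3. -/

import Mathlib

/-!
Up to the factor `c = 1/(2√3)`, the four vertices are the even sign vectors `sᵢ ∈ {±1}³`, whose
Gram matrix is `⟪sᵢ, sⱼ⟫ = 3` for `i = j` and `-1` otherwise. Since `c² = 1/12`, this gives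
`‖aᵢ‖² = 1/4` and, for `i ≠ j`, `‖aᵢ + aⱼ‖² = 1/4 + 1/4 - 2/12 = 1/3`.
-/

open Real RealInnerProductSpace Matrix WithLp

def tetrahedronSigns : Fin 4 → Fin 3 → ℝ :=
  ![![1, 1, 1], ![-1, -1, 1], ![-1, 1, -1], ![1, -1, -1]]

lemma sum_tetrahedronSigns : ∑ i, tetrahedronSigns i = 0 := by
  ext k
  fin_cases k <;> simp [tetrahedronSigns, Fin.sum_univ_four]

lemma tetrahedronSigns_dotProduct (i j : Fin 4) :
    tetrahedronSigns i ⬝ᵥ tetrahedronSigns j = if i = j then 3 else -1 := by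
  fin_cases i <;> fin_cases j <;>
    simp [tetrahedronSigns, dotProduct, Fin.sum_univ_three] <;> norm_num

lemma EuclideanSpace.inner_smul_toLp_smul_toLp {ι : Type*} [Fintype ι] (c : ℝ) (u v : ι → ℝ) :
    ⟪c • toLp 2 u, c • toLp 2 v⟫ = c ^ 2 * (u ⬝ᵥ v) := by
  rw [real_inner_smul_left, real_inner_smul_right, EuclideanSpace.inner_toLp_toLp, star_trivial,
    dotProduct_comm]
  ring

theorem regular_tetrahedron_vertices (a : Fin 4 → EuclideanSpace ℝ (Fin 3))
    (ha0 : a 0 = (1 / (2 * Real.sqrt 3)) • (WithLp.equiv 2 (Fin 3 → ℝ)).symm ![1, 1, 1])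
    (ha1 : a 1 = (1 / (2 * Real.sqrt 3)) • (WithLp.equiv 2 (Fin 3 → ℝ)).symm ![-1, -1, 1])
    (ha2 : a 2 = (1 / (2 * Real.sqrt 3)) • (WithLp.equiv 2 (Fin 3 → ℝ)).symm ![-1, 1, -1])
    (ha3 : a 3 = (1 / (2 * Real.sqrt 3)) • (WithLp.equiv 2 (Fin 3 → ℝ)).symm ![1, -1, -1]) :
    (∑ i, a i = 0) ∧ (∑ i, ‖a i‖ = 2) ∧
    (∀ i j : Fin 4, i ≠ j →
      ‖a i‖ + ‖a j‖ - ‖a i + a j‖ = 1 - 1 / Real.sqrt 3) := by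
  set c : ℝ := 1 / (2 * √3)
  have hc : c ^ 2 = 1 / 12 := by
    rw [div_pow, mul_pow, sq_sqrt (by norm_num)]; norm_num
  have ha : a = fun i ↦ c • toLp 2 (tetrahedronSigns i) := by
    funext i; fin_cases i <;> simp [ha0, ha1, ha2, ha3, tetrahedronSigns]
  have hinner (i j : Fin 4) : ⟪a i, a j⟫ = if i = j then 1 / 4 else -1 / 12 := by
    rw [ha, EuclideanSpace.inner_smul_toLp_smul_toLp, tetrahedronSigns_dotProduct, hc]
    split_ifs <;> norm_num
  have hnorm (i : Fin 4) : ‖a i‖ = 1 / 2 := by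
    rw [norm_eq_sqrt_real_inner, hinner, if_pos rfl, show (1 : ℝ) / 4 = (1 / 2) ^ 2 by norm_num,
      sqrt_sq (by norm_num)]
  have hpair (i j : Fin 4) (hij : i ≠ j) : ‖a i + a j‖ = 1 / √3 := by
    have hsq : ‖a i + a j‖ ^ 2 = (1 / √3) ^ 2 := by
      rw [norm_add_sq_real, hnorm, hnorm, hinner, if_neg hij, div_pow 1 √3, sq_sqrt (by norm_num)]
      norm_num
    exact (sq_eq_sq₀ (norm_nonneg _) (by positivity)).1 hsq
  refine ⟨?_, ?_, fun i j hij ↦ ?_⟩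
  · rw [ha, ← Finset.smul_sum, ← toLp_sum, sum_tetrahedronSigns, toLp_zero, smul_zero]
  · norm_num [hnorm]
  · rw [hnorm, hnorm, hpair i j hij]; ring
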